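/- arXiv:2605.11187 — 7 statements merged into one kernel-verified Lean document; each statement's English description precedes it below -/
import Mathlib

section
/- Let q = 2^h with h ≥ 2, and let a₁₁, a₁₃, a₃₃ ∈ F_q be all nonzero. Let C = {(x, y) ∈ F_q² : a₁₁x² + a₁₃x + a₃₃ = 0} and Δ = {(x, a·x²) : x ∈ F_q^*, Tr(a) = 0}. Then |Δ ∩ C| = q if Tr(a₁₁a₃₃/a₁₃²) = 0, and |Δ ∩ C| = 0 if Tr(a₁₁a₃₃/a₁₃²) = 1. -/
/-!
Substituting `x = a₁₃ t / a₁₁` turns `a₁₁x² + a₁₃x + a₃₃ = 0` into the Artin–Schreier equation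
`t² + t = a₁₁a₃₃/a₁₃²`. The additive map `t ↦ t² + t` has kernel `{0, 1}`, so its image has `q/2`
elements; since `Tr (t²) = Tr t`, that image lies in the kernel of the trace, which also has `q/2`
elements, so the two coincide. Hence `C` consists of two vertical lines when the trace vanishes and is
empty otherwise, and since `a₃₃ ≠ 0` neither line is `x = 0`. Each such line meets `Δ` in one point
`(x, a x²)` for each of the `q/2` values of `a` with `Tr a = 0`.
-/

open Set

section TraceFiniteField

variable {K L : Type*} [Field K] [Fintype K] [Field L] [Algebra K L] [FiniteDimensional K L]

theorem Algebra.trace_pow_card (x : L) :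
    Algebra.trace K L (x ^ Fintype.card K) = Algebra.trace K L x :=
  Algebra.trace_eq_of_algEquiv (FiniteField.frobeniusAlgEquivOfAlgebraic K L) x

theorem Algebra.ncard_trace_eq_zero_mul_card :
    {x : L | Algebra.trace K L x = 0}.ncard * Fintype.card K = Nat.card L := by
  let f := (Algebra.trace K L).toAddMonoidHom
  have hrange : f.range = ⊤ := AddMonoidHom.range_eq_top.mpr (Algebra.trace_surjective K L)
  rw [← f.ker.card_mul_index, AddSubgroup.index_ker, hrange, AddSubgroup.card_top,
    Nat.card_eq_fintype_card (α := K), ← Nat.card_coe_set_eq]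
  rfl

end TraceFiniteField

namespace CharTwo

variable {F : Type*} [Field F] [CharP F 2]

theorem sq_add_self_eq_sq_add_self_iff {s t : F} :
    t ^ 2 + t = s ^ 2 + s ↔ t = s ∨ t = s + 1 := by
  have hfactor : t ^ 2 + t - (s ^ 2 + s) = (t - s) * (t - (s + 1)) := by
    linear_combination (t * s - s ^ 2 + t - s) * two_eq_zero (R := F)
  rw [← sub_eq_zero, hfactor, mul_eq_zero, sub_eq_zero, sub_eq_zero]

/-- The Artin–Schreier map `t ↦ t² + t`. -/
def sqAddSelf : F →+ F where
  toFun t := t ^ 2 + t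
  map_zero' := by ring
  map_add' a b := by rw [add_sq]; ring

theorem nat_card_ker_sqAddSelf : Nat.card (sqAddSelf (F := F)).ker = 2 := by
  have hker : ((sqAddSelf (F := F)).ker : Set F) = {0, 1} := by
    ext t
    change t ^ 2 + t = 0 ↔ t = 0 ∨ t = 1
    simpa using sq_add_self_eq_sq_add_self_iff (s := (0 : F)) (t := t)
  rw [← SetLike.coe_sort_coe, hker, Nat.card_coe_set_eq, ncard_pair zero_ne_one]

theorem quadratic_eq_zero_iff {a b : F} (ha : a ≠ 0) (hb : b ≠ 0) (c x : F) :
    a * x ^ 2 + b * x + c = 0 ↔ (a * x / b) ^ 2 + a * x / b = a * c / b ^ 2 := by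
  have hscale : (a * x / b) ^ 2 + a * x / b + a * c / b ^ 2 =
      a / b ^ 2 * (a * x ^ 2 + b * x + c) := by
    field_simp
  rw [← CharTwo.add_eq_zero (a := (a * x / b) ^ 2 + a * x / b), hscale, mul_eq_zero,
    or_iff_right (div_ne_zero ha (pow_ne_zero 2 hb))]

end CharTwo

section TraceZModTwo

variable {F : Type*} [Field F] [Fintype F] [Algebra (ZMod 2) F]

theorem trace_sq_add_self (t : F) : Algebra.trace (ZMod 2) F (t ^ 2 + t) = 0 := by
  have htrace_sq := Algebra.trace_pow_card (K := ZMod 2) t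
  rw [ZMod.card] at htrace_sq
  rw [map_add, htrace_sq, CharTwo.add_self_eq_zero]

theorem range_sq_add_self :
    range (fun t : F => t ^ 2 + t) = {c : F | Algebra.trace (ZMod 2) F c = 0} := by
  have := charP_of_injective_algebraMap' (ZMod 2) (A := F) 2
  refine eq_of_subset_of_ncard_le (range_subset_iff.mpr trace_sq_add_self) ?_ (toFinite _)
  have hker : {c : F | Algebra.trace (ZMod 2) F c = 0}.ncard * 2 = Nat.card F := by
    simpa only [ZMod.card] using Algebra.ncard_trace_eq_zero_mul_card (K := ZMod 2) (L := F)
  have hrange : 2 * (range fun t : F => t ^ 2 + t).ncard = Nat.card F := by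
    let φ := CharTwo.sqAddSelf (F := F)
    calc 2 * (range fun t : F => t ^ 2 + t).ncard = Nat.card φ.ker * φ.ker.index := by
          rw [CharTwo.nat_card_ker_sqAddSelf, AddSubgroup.index_ker, ← Nat.card_coe_set_eq]
          rfl
      _ = Nat.card F := φ.ker.card_mul_index
  omega

theorem ncard_sq_add_self_eq (d : F) :
    {t : F | t ^ 2 + t = d}.ncard = if Algebra.trace (ZMod 2) F d = 0 then 2 else 0 := by
  have := charP_of_injective_algebraMap' (ZMod 2) (A := F) 2
  split_ifs with hd
  · obtain ⟨s, rfl⟩ : d ∈ range (fun t : F => t ^ 2 + t) := range_sq_add_self (F := F) ▸ hd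
    have hroots : {t : F | t ^ 2 + t = s ^ 2 + s} = {s, s + 1} := by
      ext t
      exact CharTwo.sq_add_self_eq_sq_add_self_iff
    rw [hroots, ncard_pair (by simp)]
  · rw [ncard_eq_zero, eq_empty_iff_forall_notMem]
    rintro t rfl
    exact hd (trace_sq_add_self t)

theorem ncard_quadratic_roots {a b : F} (ha : a ≠ 0) (hb : b ≠ 0) (c : F) :
    {x : F | a * x ^ 2 + b * x + c = 0}.ncard =
      if Algebra.trace (ZMod 2) F (a * c / b ^ 2) = 0 then 2 else 0 := by
  have := charP_of_injective_algebraMap' (ZMod 2) (A := F) 2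
  have hpreimage : {x : F | a * x ^ 2 + b * x + c = 0} =
      (fun x => a * x / b) ⁻¹' {t | t ^ 2 + t = a * c / b ^ 2} := by
    ext x
    exact CharTwo.quadratic_eq_zero_iff ha hb c x
  have hbij : Function.Bijective fun x : F => a * x / b := by
    simpa only [mul_div_right_comm] using mulLeft_bijective₀ _ (div_ne_zero ha hb)
  rw [hpreimage, ncard_preimage_of_injective_subset_range hbij.1 (hbij.2.range_eq ▸ subset_univ _),
    ncard_sq_add_self_eq]

end TraceZModTwo

theorem ncard_parabolas_inter_fst_preimage {F : Type*} [MonoidWithZero F] [IsRightCancelMulZero F]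
    (A R : Set F) (hR : 0 ∉ R) :
    ({p : F × F | ∃ x a : F, x ≠ 0 ∧ a ∈ A ∧ p = (x, a * x ^ 2)} ∩ Prod.fst ⁻¹' R).ncard =
      R.ncard * A.ncard := by
  have hne : ∀ x ∈ R, x ≠ 0 := fun x hx h0 => hR (h0 ▸ hx)
  have himage : {p : F × F | ∃ x a : F, x ≠ 0 ∧ a ∈ A ∧ p = (x, a * x ^ 2)} ∩ Prod.fst ⁻¹' R =
      (fun q : F × F => (q.1, q.2 * q.1 ^ 2)) '' R ×ˢ A := by
    ext p
    constructor
    · rintro ⟨⟨x, a, -, ha, rfl⟩, hx⟩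
      exact ⟨(x, a), ⟨hx, ha⟩, rfl⟩
    · rintro ⟨⟨x, a⟩, ⟨hx, ha⟩, rfl⟩
      exact ⟨⟨x, a, hne x hx, ha, rfl⟩, hx⟩
  have hinj : InjOn (fun q : F × F => (q.1, q.2 * q.1 ^ 2)) (R ×ˢ A) := by
    rintro ⟨x, a⟩ ⟨hx, -⟩ ⟨y, b⟩ - h
    obtain ⟨rfl, hab⟩ := Prod.mk.inj h
    simpa using mul_right_cancel₀ (pow_ne_zero 2 (hne x hx)) hab
  rw [himage, hinj.ncard_image, ncard_prod]

theorem stmt7_general {F : Type*} [Field F] [Fintype F] [Algebra (ZMod 2) F]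
    {h : ℕ} (hcard : Fintype.card F = 2 ^ h)
    (a11 a13 a33 : F) (h11 : a11 ≠ 0) (h13 : a13 ≠ 0) (h33 : a33 ≠ 0) :
    (Algebra.trace (ZMod 2) F (a11 * a33 / a13 ^ 2) = 0 →
      Set.ncard ({p : F × F | ∃ x a : F, x ≠ 0 ∧ Algebra.trace (ZMod 2) F a = 0 ∧
          p = (x, a * x ^ 2)} ∩
        {p : F × F | a11 * p.1 ^ 2 + a13 * p.1 + a33 = 0}) = 2 ^ h) ∧
    (Algebra.trace (ZMod 2) F (a11 * a33 / a13 ^ 2) = 1 →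
      Set.ncard ({p : F × F | ∃ x a : F, x ≠ 0 ∧ Algebra.trace (ZMod 2) F a = 0 ∧
          p = (x, a * x ^ 2)} ∩
        {p : F × F | a11 * p.1 ^ 2 + a13 * p.1 + a33 = 0}) = 0) := by
  have hkernel := Algebra.ncard_trace_eq_zero_mul_card (K := ZMod 2) (L := F)
  rw [ZMod.card, Nat.card_eq_fintype_card, hcard] at hkernel
  have hcount := ncard_parabolas_inter_fst_preimage {a : F | Algebra.trace (ZMod 2) F a = 0}
    {x | a11 * x ^ 2 + a13 * x + a33 = 0} (by simpa using h33)
  rw [ncard_quadratic_roots h11 h13] at hcount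
  constructor
  · intro hc
    rw [hc, if_pos rfl] at hcount
    exact hcount.trans (by omega)
  · intro hc
    rw [hc, if_neg one_ne_zero, zero_mul] at hcount
    exact hcount

theorem stmt7 {F : Type*} [Field F] [Fintype F] [Algebra (ZMod 2) F]
    {h : ℕ} (hh : 2 ≤ h) (hcard : Fintype.card F = 2 ^ h)
    (a11 a13 a33 : F) (h11 : a11 ≠ 0) (h13 : a13 ≠ 0) (h33 : a33 ≠ 0) :
    (Algebra.trace (ZMod 2) F (a11 * a33 / a13 ^ 2) = 0 →
      Set.ncard ({p : F × F | ∃ x a : F, x ≠ 0 ∧ Algebra.trace (ZMod 2) F a = 0 ∧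
          p = (x, a * x ^ 2)} ∩
        {p : F × F | a11 * p.1 ^ 2 + a13 * p.1 + a33 = 0}) = 2 ^ h) ∧
    (Algebra.trace (ZMod 2) F (a11 * a33 / a13 ^ 2) = 1 →
      Set.ncard ({p : F × F | ∃ x a : F, x ≠ 0 ∧ Algebra.trace (ZMod 2) F a = 0 ∧
          p = (x, a * x ^ 2)} ∩
        {p : F × F | a11 * p.1 ^ 2 + a13 * p.1 + a33 = 0}) = 0) :=
  stmt7_general hcard a11 a13 a33 h11 h13 h33
end

section
/- Let q = 2^h with h ≥ 2, and let a₁₃ ∈ F_q with a₁₃ ≠ 0, a₁₁ ∈ F_q with Tr(a₁₁) = 0. Set a₃₃ = a₁₃². Let C = {(x, y) ∈ F_q² : a₁₁x² + a₁₃x + y + a₃₃ = 0} and Δ = {(x, a·x²) : x ∈ F_q^*, Tr(a) = 0}. Then |Δ ∩ C| = q − 1. -/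
theorem stmt11 {F : Type*} [Field F] [Fintype F] [Algebra (ZMod 2) F]
    {h : ℕ} (hh : 2 ≤ h) (hcard : Fintype.card F = 2 ^ h)
    (a11 a13 a33 : F) (h13 : a13 ≠ 0) (htr : Algebra.trace (ZMod 2) F a11 = 0)
    (h33 : a33 = a13 ^ 2) :
    Set.ncard ({p : F × F | ∃ x a : F, x ≠ 0 ∧ Algebra.trace (ZMod 2) F a = 0 ∧
        p = (x, a * x ^ 2)} ∩
      {p : F × F | a11 * p.1 ^ 2 + a13 * p.1 + p.2 + a33 = 0}) = 2 ^ h - 1 := by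
  haveI : CharP F 2 := charP_of_injective_algebraMap
    (algebraMap (ZMod 2) F).injective 2
  haveI : PerfectRing F 2 := PerfectRing.ofSurjective F 2
    (Finite.injective_iff_surjective.mp (frobenius_inj F 2))
  let e : F ≃ₐ[ZMod 2] F := AlgEquiv.ofRingEquiv (f := frobeniusEquiv F 2)
    (fun r => by
      show (algebraMap (ZMod 2) F r) ^ 2 = algebraMap (ZMod 2) F r
      rw [← map_pow]
      congr 1
      revert r; decide)
  have htr2 : ∀ t : F, Algebra.trace (ZMod 2) F (t ^ 2) =
      Algebra.trace (ZMod 2) F t := by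
    intro t
    have := Algebra.trace_eq_of_algEquiv e t
    simpa [e, AlgEquiv.ofRingEquiv, frobenius_def] using this
  have h2 : (2 : F) = 0 := by
    have := CharP.cast_eq_zero F 2; exact_mod_cast this
  have hset : ({p : F × F | ∃ x a : F, x ≠ 0 ∧ Algebra.trace (ZMod 2) F a = 0 ∧
        p = (x, a * x ^ 2)} ∩
      {p : F × F | a11 * p.1 ^ 2 + a13 * p.1 + p.2 + a33 = 0}) =
      (fun x : F => (x, a11 * x ^ 2 + a13 * x + a33)) '' {x : F | x ≠ 0} := by
    ext ⟨u, v⟩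
    constructor
    · rintro ⟨⟨x, a, hx, hta, hp⟩, hC⟩
      obtain ⟨rfl, rfl⟩ := Prod.mk.inj hp
      simp only [Set.mem_setOf_eq] at hC
      refine ⟨u, hx, ?_⟩
      have : a11 * u ^ 2 + a13 * u + a33 = a * u ^ 2 := by
        linear_combination hC - u ^ 2 * a * h2
      simp [this]
    · rintro ⟨x, hx, hxy⟩
      have hxy' : (x, a11 * x ^ 2 + a13 * x + a33) = (u, v) := hxy
      obtain ⟨rfl, rfl⟩ := Prod.mk.inj hxy'
      constructor
      · refine ⟨x, a11 + a13 / x + (a13 / x) ^ 2, hx, ?_, ?_⟩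
        · rw [map_add, map_add, htr, htr2, zero_add, ← two_mul]
          exact mul_eq_zero_of_left (by decide) _
        · have hx0 : x ≠ 0 := hx
          have : (a11 + a13 / x + (a13 / x) ^ 2) * x ^ 2 =
              a11 * x ^ 2 + a13 * x + a33 := by
            rw [h33]
            field_simp
          simp [this]
      · simp only [Set.mem_setOf_eq]
        linear_combination (a11 * x ^ 2 + a13 * x + a33) * h2
  rw [hset, Set.ncard_image_of_injOn (fun a _ b _ hab => (Prod.mk.inj hab).1)]
  have huniv : ({x : F | x ≠ 0} : Set F) = Set.univ \ {0} := by ext x; simp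
  rw [huniv, Set.ncard_diff (Set.subset_univ {0})]
  simp [Set.ncard_univ, hcard]
end

section
/- Let q = 2^h with h ≥ 2, and let a₁₁, a₁₃, a₃₃ ∈ F_q with a₃₃ ∉ {0, a₁₃²} and Tr(a₁₁) = 0. Let C = {(x,y) ∈ F_q² : a₁₁x² + a₁₃x + y + a₃₃ = 0} and Δ̄ = {(x, a·x²) : x ∈ F_q, Tr(a) = 0}. Then |Δ̄ ∩ C| = q/2 − 1. -/
/-! A point `(x, y)` of `C` lies on `Y = a X²` iff `x ≠ 0` and `a = a₁₁ + a₁₃/x + a₃₃/x²`.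
Writing `a₃₃ = s²`, additivity and Frobenius invariance of the trace give
`Tr a = Tr a₁₁ + Tr ((a₁₃ + s)/x) = Tr ((a₁₃ + s)/x)`, and `a₁₃ + s ≠ 0` because `a₃₃ ≠ a₁₃²`.
Since `x ↦ (a₁₃ + s)/x` permutes `Fˣ`, the intersection is in bijection with the nonzero
elements of the kernel of the trace, a hyperplane of `F` over `𝔽₂`: there are `q/2 - 1` of them. -/

theorem FiniteField.trace_zmod_pow_char {p : ℕ} [Fact p.Prime] {F : Type*} [Field F] [Finite F]
    [Algebra (ZMod p) F] (x : F) :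
    Algebra.trace (ZMod p) F (x ^ p) = Algebra.trace (ZMod p) F x := by
  have : CharP F p := charP_of_injective_algebraMap (algebraMap (ZMod p) F).injective p
  let frob : F ≃ₐ[ZMod p] F := AlgEquiv.ofRingEquiv (f := frobeniusEquiv F p)
    fun c => by rw [frobeniusEquiv_apply, frobenius_def, ← map_pow, ZMod.pow_card]
  exact Algebra.trace_eq_of_algEquiv frob x

section KernelOfTrace

variable (K L : Type*) [Field K] [Field L] [Algebra K L] [FiniteDimensional K L]
  [Algebra.IsSeparable K L]

theorem Algebra.card_ker_trace_mul_card :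
    Nat.card (LinearMap.ker (Algebra.trace K L)) * Nat.card K = Nat.card L := by
  rw [(LinearMap.ker (Algebra.trace K L)).card_eq_card_quotient_mul_card,
    Nat.card_congr (LinearMap.quotKerEquivOfSurjective _ (Algebra.trace_surjective K L)).toEquiv]

theorem Algebra.ncard_ne_zero_and_trace_eq_zero [Finite K] :
    {x : L | x ≠ 0 ∧ Algebra.trace K L x = 0}.ncard = Nat.card L / Nat.card K - 1 := by
  have hset : {x : L | x ≠ 0 ∧ Algebra.trace K L x = 0} =
      (LinearMap.ker (Algebra.trace K L) : Set L) \ {0} := by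
    ext x
    simp [and_comm]
  rw [hset, Set.ncard_sdiff_singleton_of_mem (Submodule.zero_mem _), ← Nat.card_coe_set_eq,
    SetLike.coe_sort_coe, ← card_ker_trace_mul_card K L, Nat.mul_div_cancel _ Nat.card_pos]

end KernelOfTrace

theorem FiniteField.trace_mul_add_sq {F : Type*} [Field F] [Finite F] [Algebra (ZMod 2) F]
    (a b u : F) :
    Algebra.trace (ZMod 2) F (a * u + (b * u) ^ 2) = Algebra.trace (ZMod 2) F ((a + b) * u) := by
  rw [map_add, trace_zmod_pow_char, ← map_add, add_mul]

theorem ncard_ne_zero_and_div {F : Type*} [Field F] {c : F} (hc : c ≠ 0) (P : F → Prop) :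
    {x : F | x ≠ 0 ∧ P (c / x)}.ncard = {v : F | v ≠ 0 ∧ P v}.ncard := by
  have hinv : Function.Involutive (c / · : F → F) := fun x => div_div_cancel₀ hc
  rw [← Set.ncard_image_of_injective _ hinv.injective]
  congr 1
  ext v
  constructor
  · rintro ⟨x, ⟨hx, hPx⟩, rfl⟩
    exact ⟨div_ne_zero hc hx, hPx⟩
  · rintro ⟨hv, hPv⟩
    exact ⟨c / v, ⟨div_ne_zero hc hv, by rwa [div_div_cancel₀ hc]⟩, hinv v⟩

section TraceZeroParabolas

variable {F : Type*} [Field F] [Finite F] [Algebra (ZMod 2) F] {a11 a13 a33 s : F}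

theorem trace_quadratic_div_sq (htr : Algebra.trace (ZMod 2) F a11 = 0) (hs : a33 = s * s)
    {x : F} (hx : x ≠ 0) :
    Algebra.trace (ZMod 2) F ((a11 * x ^ 2 + a13 * x + a33) / x ^ 2) =
      Algebra.trace (ZMod 2) F ((a13 + s) / x) := by
  have hsplit : (a11 * x ^ 2 + a13 * x + a33) / x ^ 2 = a11 + (a13 * x⁻¹ + (s * x⁻¹) ^ 2) := by
    rw [hs]
    field_simp
    ring
  rw [hsplit, map_add, htr, zero_add, FiniteField.trace_mul_add_sq, div_eq_mul_inv]

theorem traceZeroParabolas_inter_eq_image (h33 : a33 ≠ 0)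
    (htr : Algebra.trace (ZMod 2) F a11 = 0) (hs : a33 = s * s) :
    {p : F × F | ∃ x a : F, Algebra.trace (ZMod 2) F a = 0 ∧ p = (x, a * x ^ 2)} ∩
        {p : F × F | a11 * p.1 ^ 2 + a13 * p.1 + p.2 + a33 = 0} =
      (fun x => (x, a11 * x ^ 2 + a13 * x + a33)) ''
        {x : F | x ≠ 0 ∧ Algebra.trace (ZMod 2) F ((a13 + s) / x) = 0} := by
  have : CharP F 2 := charP_of_injective_algebraMap (algebraMap (ZMod 2) F).injective 2
  ext ⟨x, y⟩
  simp only [Set.mem_inter_iff, Set.mem_ofPred_eq, Set.mem_image, Prod.mk.injEq]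
  constructor
  · rintro ⟨⟨x, a, ha, rfl, rfl⟩, hC⟩
    have hy : a * x ^ 2 = a11 * x ^ 2 + a13 * x + a33 := by
      rw [← CharTwo.add_eq_zero]
      linear_combination hC
    have hx : x ≠ 0 := by
      rintro rfl
      exact h33 (by simpa using hy.symm)
    refine ⟨x, ⟨hx, ?_⟩, rfl, hy.symm⟩
    rw [← trace_quadratic_div_sq htr hs hx, ← hy, mul_div_cancel_right₀ _ (pow_ne_zero 2 hx), ha]
  · rintro ⟨x, ⟨hx, htrx⟩, rfl, rfl⟩
    refine ⟨⟨x, (a11 * x ^ 2 + a13 * x + a33) / x ^ 2, ?_, rfl, ?_⟩, ?_⟩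
    · rw [trace_quadratic_div_sq htr hs hx, htrx]
    · rw [div_mul_cancel₀ _ (pow_ne_zero 2 hx)]
    · linear_combination CharTwo.add_self_eq_zero (a11 * x ^ 2 + a13 * x + a33)

end TraceZeroParabolas

theorem stmt13_general {F : Type*} [Field F] [Fintype F] [Algebra (ZMod 2) F]
    {h : ℕ} (hcard : Fintype.card F = 2 ^ h)
    (a11 a13 a33 : F) (h33 : a33 ≠ 0) (h33' : a33 ≠ a13 ^ 2)
    (htr : Algebra.trace (ZMod 2) F a11 = 0) :
    Set.ncard ({p : F × F | ∃ x a : F, Algebra.trace (ZMod 2) F a = 0 ∧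
        p = (x, a * x ^ 2)} ∩
      {p : F × F | a11 * p.1 ^ 2 + a13 * p.1 + p.2 + a33 = 0}) = 2 ^ h / 2 - 1 := by
  have : CharP F 2 := charP_of_injective_algebraMap (algebraMap (ZMod 2) F).injective 2
  obtain ⟨s, hs⟩ := FiniteField.isSquare_of_char_two (ringChar.eq F 2) a33
  have hc : a13 + s ≠ 0 := by
    rw [Ne, CharTwo.add_eq_zero]
    rintro rfl
    exact h33' (by rw [hs, sq])
  rw [traceZeroParabolas_inter_eq_image h33 htr hs,
    Set.ncard_image_of_injective _ fun x y hxy => congrArg Prod.fst hxy,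
    ncard_ne_zero_and_div hc fun v => Algebra.trace (ZMod 2) F v = 0,
    Algebra.ncard_ne_zero_and_trace_eq_zero, Nat.card_eq_fintype_card, hcard, Nat.card_zmod]

theorem stmt13 {F : Type*} [Field F] [Fintype F] [Algebra (ZMod 2) F]
    {h : ℕ} (hh : 2 ≤ h) (hcard : Fintype.card F = 2 ^ h)
    (a11 a13 a33 : F) (h33 : a33 ≠ 0) (h33' : a33 ≠ a13 ^ 2)
    (htr : Algebra.trace (ZMod 2) F a11 = 0) :
    Set.ncard ({p : F × F | ∃ x a : F, Algebra.trace (ZMod 2) F a = 0 ∧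
        p = (x, a * x ^ 2)} ∩
      {p : F × F | a11 * p.1 ^ 2 + a13 * p.1 + p.2 + a33 = 0}) = 2 ^ h / 2 - 1 :=
  stmt13_general hcard a11 a13 a33 h33 h33' htr
end

section
/- Let q = 2^h with h ≥ 2, and let a₁₁, a₁₃, a₃₃ ∈ F_q with a₃₃ ∉ {0, a₁₃²} and Tr(a₁₁) = 1. Let C = {(x,y) ∈ F_q² : a₁₁x² + a₁₃x + y + a₃₃ = 0} and Δ̄ = {(x, a·x²) : x ∈ F_q, Tr(a) = 0}. Then |Δ̄ ∩ C| = q/2. -/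
theorem stmt14 {F : Type*} [Field F] [Fintype F] [Algebra (ZMod 2) F]
    {h : ℕ} (hh : 2 ≤ h) (hcard : Fintype.card F = 2 ^ h)
    (a11 a13 a33 : F) (h33 : a33 ≠ 0) (h33' : a33 ≠ a13 ^ 2)
    (htr : Algebra.trace (ZMod 2) F a11 = 1) :
    Set.ncard ({p : F × F | ∃ x a : F, Algebra.trace (ZMod 2) F a = 0 ∧
        p = (x, a * x ^ 2)} ∩
      {p : F × F | a11 * p.1 ^ 2 + a13 * p.1 + p.2 + a33 = 0}) = 2 ^ h / 2 := by
  classical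
  haveI : CharP F 2 := charP_of_injective_ringHom (algebraMap (ZMod 2) F).injective 2
  set Tr := Algebra.trace (ZMod 2) F with hTrdef
  have htwo : (2 : F) = 0 := CharTwo.two_eq_zero
  -- squaring is bijective
  have hfrobinj : Function.Injective (fun x : F => x ^ 2) := by
    intro a b hab
    simp only at hab
    have h1 : (a + b) ^ 2 = 0 := by rw [CharTwo.add_sq, hab, CharTwo.add_self_eq_zero]
    have h2 : a + b = 0 := by
      have := pow_eq_zero_iff (n := 2) two_ne_zero |>.mp h1
      exact this
    rw [CharTwo.add_eq_iff_eq_add, zero_add] at h2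
    exact h2
  have hfrobsurj : Function.Surjective (fun x : F => x ^ 2) :=
    Finite.injective_iff_surjective.mp hfrobinj
  -- trace of square
  have hz2 : ∀ r : ZMod 2, r ^ 2 = r := by decide
  let φ : F →ₐ[ZMod 2] F :=
    { toFun := fun x => x ^ 2
      map_one' := one_pow 2
      map_mul' := fun x y => mul_pow x y 2
      map_zero' := zero_pow two_ne_zero
      map_add' := fun x y => CharTwo.add_sq x y
      commutes' := fun r => by
        show (algebraMap (ZMod 2) F r) ^ 2 = algebraMap (ZMod 2) F r
        rw [← map_pow, hz2] }
  let e : F ≃ₐ[ZMod 2] F := AlgEquiv.ofBijective φ ⟨hfrobinj, hfrobsurj⟩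
  have tr_sq : ∀ x : F, Tr (x ^ 2) = Tr x := fun x => Algebra.trace_eq_of_algEquiv e x
  -- square root of a33
  obtain ⟨s, hs⟩ := hfrobsurj a33
  simp only at hs
  set c := a13 + s with hcdef
  have hc : c ≠ 0 := by
    intro hc0
    rw [hcdef, CharTwo.add_eq_iff_eq_add, zero_add] at hc0
    exact h33' (by rw [← hs, hc0])
  -- key trace computation
  have key : ∀ x : F, x ≠ 0 →
      Tr ((a11 * x ^ 2 + a13 * x + a33) * (x⁻¹) ^ 2) = 1 + Tr (c * x⁻¹) := by
    intro x hx
    have h1 : (a11 * x ^ 2 + a13 * x + a33) * (x⁻¹) ^ 2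
        = a11 + a13 * x⁻¹ + (s * x⁻¹) ^ 2 := by
      rw [← hs]; field_simp
    rw [h1, map_add, map_add, tr_sq, htr, add_assoc, ← map_add]
    congr 2
    rw [hcdef, add_mul]
  have z1 : ∀ z : ZMod 2, (1 + z = 0) ↔ z = 1 := by decide
  have z11 : (1 + 1 : ZMod 2) = 0 := by decide
  -- rewrite the set
  have hSet : ({p : F × F | ∃ x a : F, Tr a = 0 ∧ p = (x, a * x ^ 2)} ∩
      {p : F × F | a11 * p.1 ^ 2 + a13 * p.1 + p.2 + a33 = 0})
      = (fun x : F => (x, a11 * x ^ 2 + a13 * x + a33)) '' {x : F | Tr (c * x⁻¹) = 1} := by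
    ext p
    simp only [Set.mem_inter_iff, Set.mem_setOf_eq, Set.mem_image]
    constructor
    · rintro ⟨⟨x, a, ha, rfl⟩, hp2⟩
      simp only at hp2
      have hx : x ≠ 0 := by
        rintro rfl
        apply h33
        linear_combination hp2
      have hy : a * x ^ 2 = a11 * x ^ 2 + a13 * x + a33 := by
        linear_combination hp2 - (a11 * x ^ 2 + a13 * x + a33) * htwo
      have haval : a = (a11 * x ^ 2 + a13 * x + a33) * (x⁻¹) ^ 2 := by
        rw [← hy]; field_simp
      refine ⟨x, ?_, ?_⟩
      · show Tr (c * x⁻¹) = 1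
        have := key x hx
        rw [← haval, ha] at this
        exact ((z1 _).mp this.symm)
      · exact congrArg (Prod.mk x) hy.symm
    · rintro ⟨x, hxT, rfl⟩
      have hx : x ≠ 0 := by
        rintro rfl
        simp only [Set.mem_setOf_eq, inv_zero, mul_zero, map_zero] at hxT
        exact one_ne_zero hxT.symm
      refine ⟨⟨x, (a11 * x ^ 2 + a13 * x + a33) * (x⁻¹) ^ 2, ?_, ?_⟩, ?_⟩
      · rw [key x hx, hxT, z11]
      · have hgx : (a11 * x ^ 2 + a13 * x + a33) * (x⁻¹) ^ 2 * x ^ 2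
            = a11 * x ^ 2 + a13 * x + a33 := by field_simp
        exact congrArg (Prod.mk x) hgx.symm
      · show a11 * x ^ 2 + a13 * x + (a11 * x ^ 2 + a13 * x + a33) + a33 = 0
        linear_combination (a11 * x ^ 2 + a13 * x + a33) * htwo
  rw [hSet, Set.ncard_image_of_injective _ (fun a b hab => congrArg Prod.fst hab)]
  have hT : {x : F | Tr (c * x⁻¹) = 1} = (fun t : F => t⁻¹) '' {t : F | Tr (c * t) = 1} := by
    ext x
    simp only [Set.mem_setOf_eq, Set.mem_image]
    constructor
    · intro hx; exact ⟨x⁻¹, hx, inv_inv x⟩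
    · rintro ⟨t, ht, rfl⟩; rwa [inv_inv]
  rw [hT, Set.ncard_image_of_injective _ inv_injective]
  have hU : {t : F | Tr (c * t) = 1}
      = ↑(Finset.univ.filter fun t : F => Tr (c * t) = 1) := by
    ext t; simp
  rw [hU, Set.ncard_coe_finset]
  -- counting
  set B := Finset.univ.filter (fun t : F => Tr (c * t) = 1) with hBdef
  set A := Finset.univ.filter (fun t : F => ¬ (Tr (c * t) = 1)) with hAdef
  have hcards : B.card + A.card = 2 ^ h := by
    rw [hBdef, hAdef, Finset.card_filter_add_card_filter_not, Finset.card_univ, hcard]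
  have z3 : ∀ z : ZMod 2, ¬ z = 1 ↔ z = 0 := by decide
  have hAB : A.card = B.card := by
    apply Finset.card_bij (fun t _ => t + c⁻¹ * a11)
    · intro t ht
      rw [hAdef, Finset.mem_filter] at ht
      rw [hBdef, Finset.mem_filter]
      refine ⟨Finset.mem_univ _, ?_⟩
      have h0 : Tr (c * t) = 0 := (z3 _).mp ht.2
      rw [mul_add, ← mul_assoc, mul_inv_cancel₀ hc, one_mul, map_add, h0, htr, zero_add]
    · intro a ha b hb hab
      exact add_right_cancel hab
    · intro b hb
      rw [hBdef, Finset.mem_filter] at hb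
      refine ⟨b + c⁻¹ * a11, ?_, ?_⟩
      · rw [hAdef, Finset.mem_filter]
        refine ⟨Finset.mem_univ _, ?_⟩
        rw [z3]
        rw [mul_add, ← mul_assoc, mul_inv_cancel₀ hc, one_mul, map_add, hb.2, htr, z11]
      · rw [add_assoc, CharTwo.add_self_eq_zero, add_zero]
  have hpow : 2 ^ h = 2 * 2 ^ (h - 1) := by
    rw [← pow_succ']
    congr 1
    omega
  omega
end

section
/- Let q = 2^h with h ≥ 2, and let a₁₁, a₁₃ ∈ F_q with a₁₃ ≠ 0 and Tr(a₁₁) = 1. Let C = {(x,y) ∈ F_q² : a₁₁x² + a₁₃x + y = 0} and Δ̄ = {(x, a·x²) : x ∈ F_q, Tr(a) = 0}. Then |Δ̄ ∩ C| = q/2 + 1. -/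
theorem stmt15 {F : Type*} [Field F] [Fintype F] [Algebra (ZMod 2) F]
    {h : ℕ} (hh : 2 ≤ h) (hcard : Fintype.card F = 2 ^ h)
    (a11 a13 : F) (h13 : a13 ≠ 0)
    (htr : Algebra.trace (ZMod 2) F a11 = 1) :
    Set.ncard ({p : F × F | ∃ x a : F, Algebra.trace (ZMod 2) F a = 0 ∧
        p = (x, a * x ^ 2)} ∩
      {p : F × F | a11 * p.1 ^ 2 + a13 * p.1 + p.2 = 0}) = 2 ^ h / 2 + 1 := by
  haveI : CharP F 2 := charP_of_injective_ringHom (algebraMap (ZMod 2) F).injective 2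
  set tr := Algebra.trace (ZMod 2) F with htrdef
  have hz2 : ∀ z : ZMod 2, z = 0 ∨ z = 1 := by decide
  have h11 : ∀ z : ZMod 2, (1 : ZMod 2) + z = 0 ↔ z = 1 := by decide
  -- the base sets
  set T1 : Set F := {t : F | tr t = 1} with hT1
  set B : Set F := {x : F | tr (a13 * x⁻¹) = 1} with hB
  set f : F → F × F := fun x => (x, a11 * x ^ 2 + a13 * x) with hf
  have hself : ∀ y : F, y + y = 0 := fun y => CharTwo.add_self_eq_zero y
  -- main set equality
  have hset : ({p : F × F | ∃ x a : F, tr a = 0 ∧ p = (x, a * x ^ 2)} ∩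
      {p : F × F | a11 * p.1 ^ 2 + a13 * p.1 + p.2 = 0}) = f '' (insert 0 B) := by
    ext p
    simp only [Set.mem_inter_iff, Set.mem_setOf_eq, Set.mem_image, Set.mem_insert_iff, hf]
    constructor
    · rintro ⟨⟨x, a, ha, rfl⟩, hc⟩
      simp only at hc
      have hax : a * x ^ 2 = a11 * x ^ 2 + a13 * x := by
        have := hc
        have h2 : a11 * x ^ 2 + a13 * x + (a11 * x ^ 2 + a13 * x + a * x ^ 2) =
            a11 * x ^ 2 + a13 * x := by rw [hc]; ring
        calc a * x ^ 2 = a11 * x ^ 2 + a13 * x + (a11 * x ^ 2 + a13 * x + a * x ^ 2) := by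
              rw [show a11 * x ^ 2 + a13 * x + (a11 * x ^ 2 + a13 * x + a * x ^ 2)
                  = (a11 * x ^ 2 + a11 * x ^ 2) + (a13 * x + a13 * x) + a * x ^ 2 by ring,
                hself, hself]; ring
          _ = a11 * x ^ 2 + a13 * x := h2
      refine ⟨x, ?_, by rw [hax]⟩
      rcases eq_or_ne x 0 with rfl | hx
      · left; rfl
      · right
        have haeq : a = a11 + a13 * x⁻¹ := by
          have hx2 : (x ^ 2 : F) ≠ 0 := pow_ne_zero _ hx
          have h' : a * x ^ 2 = (a11 + a13 * x⁻¹) * x ^ 2 := by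
            rw [hax]; field_simp
          exact mul_right_cancel₀ hx2 h'
        have : tr a = tr a11 + tr (a13 * x⁻¹) := by rw [haeq, map_add]
        rw [ha, htr] at this
        exact (h11 _).mp this.symm
    · rintro ⟨x, hx, rfl⟩
      rcases hx with rfl | hx
      · exact ⟨⟨0, 0, by simp, by simp⟩, by simp⟩
      · have hx0 : x ≠ 0 := by
          rintro rfl
          simp [hB] at hx
        refine ⟨⟨x, a11 + a13 * x⁻¹, ?_, ?_⟩, ?_⟩
        · have hx' : tr (a13 * x⁻¹) = 1 := hx
          rw [map_add, htr, hx']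
          decide
        · have : (a11 + a13 * x⁻¹) * x ^ 2 = a11 * x ^ 2 + a13 * x := by
            field_simp
          rw [this]
        · simp only
          rw [show a11 * x ^ 2 + a13 * x + (a11 * x ^ 2 + a13 * x)
              = (a11 * x ^ 2 + a11 * x ^ 2) + (a13 * x + a13 * x) by ring, hself, hself, add_zero]
  rw [hset]
  have hfinj : Function.Injective f := fun a b hab => congrArg Prod.fst hab
  rw [Set.ncard_image_of_injective _ hfinj]
  have h0B : (0 : F) ∉ B := by simp [hB]
  rw [Set.ncard_insert_of_notMem h0B (Set.toFinite B)]
  -- |B| = |T1| via x ↦ a13 * x⁻¹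
  have hBimg : B = (fun t => a13 * t⁻¹) '' T1 := by
    ext x
    simp only [hB, hT1, Set.mem_setOf_eq, Set.mem_image]
    constructor
    · intro hx
      have hx0 : x ≠ 0 := by rintro rfl; simp at hx
      exact ⟨a13 * x⁻¹, hx, by field_simp⟩
    · rintro ⟨t, ht, rfl⟩
      have ht0 : t ≠ 0 := by rintro rfl; simp [htrdef] at ht
      have : a13 * (a13 * t⁻¹)⁻¹ = t := by field_simp
      rw [this]; exact ht
  have hinjOn : Set.InjOn (fun t => a13 * t⁻¹) T1 := by
    intro s hs t ht hst
    have hs0 : s ≠ 0 := by rintro rfl; simp [hT1, htrdef] at hs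
    have ht0 : t ≠ 0 := by rintro rfl; simp [hT1, htrdef] at ht
    simp only at hst
    have := mul_left_cancel₀ h13 hst
    exact inv_injective this
  have hBcard : B.ncard = T1.ncard := by rw [hBimg, Set.ncard_image_of_injOn hinjOn]
  -- |T1| = 2^h / 2
  set T0 : Set F := {t : F | tr t = 0} with hT0
  have e : T0 ≃ T1 := by
    refine ⟨fun x => ⟨x.1 + a11, ?_⟩, fun x => ⟨x.1 + a11, ?_⟩, ?_, ?_⟩
    · have hx := x.2
      simp only [hT0, Set.mem_setOf_eq] at hx
      simp only [hT1, Set.mem_setOf_eq, map_add, hx, htr, zero_add]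
    · have hx := x.2
      simp only [hT1, Set.mem_setOf_eq] at hx
      simp only [hT0, Set.mem_setOf_eq, map_add, hx, htr]
      decide
    · intro x; ext; simp [add_assoc, CharTwo.add_self_eq_zero a11]
    · intro x; ext; simp [add_assoc, CharTwo.add_self_eq_zero a11]
  have hcard01 : T0.ncard = T1.ncard := by
    rw [← Nat.card_coe_set_eq, ← Nat.card_coe_set_eq]
    exact Nat.card_congr e
  have hunion : T0 ∪ T1 = Set.univ := by
    ext t
    simp only [Set.mem_union, hT0, hT1, Set.mem_setOf_eq, Set.mem_univ, iff_true]
    exact hz2 (tr t)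
  have hdisj : Disjoint T0 T1 := by
    rw [Set.disjoint_left]
    intro t ht0 ht1
    simp only [hT0, hT1, Set.mem_setOf_eq] at ht0 ht1
    rw [ht0] at ht1; exact one_ne_zero ht1.symm
  have hsum : T0.ncard + T1.ncard = 2 ^ h := by
    rw [← Set.ncard_union_eq hdisj (Set.toFinite _) (Set.toFinite _), hunion,
      Set.ncard_univ, Nat.card_eq_fintype_card, hcard]
  have h2 : 2 * T1.ncard = 2 ^ h := by omega
  rw [hBcard]
  omega
end

section
/- Let q = 2^h with h ≥ 2 and let Δ = {(x, a·x²) : x ∈ F_q^*, Tr(a) = 0}. For the hyperbola-type line ℓ : Y₂ = mY₁ + b (the image under evaluation of degree-1 symmetric functions), the weight w(ℓ) = |Δ| − |ℓ ∩ Δ| of the corresponding codeword of the reduced Datta–Johnsen code takes only the values (q−1)(q−2)/2, q(q−2)/2, (q² − 2q + 2)/2, and q(q−1)/2 as ℓ ranges over all lines of F_q² (where the zero polynomial is excluded). -/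
theorem stmt18 {F : Type*} [Field F] [Fintype F] [Algebra (ZMod 2) F]
    {h : ℕ} (hh : 2 ≤ h) (hcard : Fintype.card F = 2 ^ h)
    (c m b : F) (hcmb : (c, m, b) ≠ (0, 0, 0)) :
    (Set.ncard {p : F × F | ∃ x a : F, x ≠ 0 ∧ Algebra.trace (ZMod 2) F a = 0 ∧
        p = (x, a * x ^ 2)}
      - Set.ncard ({p : F × F | c * p.2 + m * p.1 + b = 0} ∩
          {p : F × F | ∃ x a : F, x ≠ 0 ∧ Algebra.trace (ZMod 2) F a = 0 ∧
            p = (x, a * x ^ 2)}))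
      ∈ ({(2 ^ h - 1) * (2 ^ h - 2) / 2, 2 ^ h * (2 ^ h - 2) / 2,
          (2 ^ h * 2 ^ h - 2 * 2 ^ h + 2) / 2, 2 ^ h * (2 ^ h - 1) / 2} : Set ℕ) := by
  classical
  have hq : (2:ℕ)^h = 2*2^(h-1) := by rw [← pow_succ']; congr 1; omega
  set k : ℕ := 2^(h-1) with hk
  have hk2 : 2 ≤ k := by
    have : (2:ℕ)^1 ≤ 2^(h-1) := Nat.pow_le_pow_right (by norm_num) (by omega)
    simpa using this
  have hchar2 : ringChar F = 2 := by
    rw [FiniteField.even_card_iff_char_two, hcard, hq]; omega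
  haveI : CharP F 2 := hchar2 ▸ ringChar.charP F
  haveI : Fact (Nat.Prime 2) := ⟨by norm_num⟩
  haveI : ExpChar F 2 := ExpChar.prime (by norm_num)
  set T : F → ZMod 2 := fun a => Algebra.trace (ZMod 2) F a with hT
  have hTadd : ∀ x y : F, T (x + y) = T x + T y := fun x y => map_add _ x y
  have hsurj : Function.Surjective (Algebra.trace (ZMod 2) F) :=
    Algebra.trace_surjective (ZMod 2) F
  have hsq : ∀ y : F, ((frobeniusEquiv F 2).symm y)^2 = y := by
    intro y
    have := frobenius_apply_frobeniusEquiv_symm F 2 y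
    rwa [frobenius_def] at this
  have ht2 : ∀ t : ZMod 2, t^2 = t := fun t => ZMod.pow_card t
  have htr_sq : ∀ x : F, T (x^2) = T x := by
    intro x
    apply (algebraMap (ZMod 2) F).injective
    calc algebraMap (ZMod 2) F (Algebra.trace (ZMod 2) F (x^2))
        = ∑ σ : F ≃ₐ[ZMod 2] F, σ (x^2) := trace_eq_sum_automorphisms _
      _ = ∑ σ : F ≃ₐ[ZMod 2] F, (σ x)^2 := by simp [map_pow]
      _ = (∑ σ : F ≃ₐ[ZMod 2] F, σ x)^2 :=
          (sum_pow_char 2 Finset.univ (fun σ : F ≃ₐ[ZMod 2] F => σ x)).symm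
      _ = (algebraMap (ZMod 2) F (Algebra.trace (ZMod 2) F x))^2 := by
            rw [trace_eq_sum_automorphisms]
      _ = algebraMap (ZMod 2) F ((Algebra.trace (ZMod 2) F x)^2) := by rw [map_pow]
      _ = algebraMap (ZMod 2) F (Algebra.trace (ZMod 2) F x) := by rw [ht2]
  -- cardinality of the trace-zero set
  set S0 : Set F := {a : F | T a = 0} with hS0def
  have hS0 : S0.ncard = k := by
    set f : F →+ ZMod 2 := (Algebra.trace (ZMod 2) F).toAddMonoidHom with hf
    have hsurj' : Function.Surjective f := hsurj
    have h1 : Nat.card F = Nat.card (F ⧸ f.ker) * Nat.card f.ker :=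
      AddSubgroup.card_eq_card_quotient_mul_card_addSubgroup f.ker
    have h2 : Nat.card (F ⧸ f.ker) = 2 := by
      rw [Nat.card_congr (QuotientAddGroup.quotientKerEquivOfSurjective f hsurj').toEquiv]
      simp [Nat.card_eq_fintype_card]
    have h3 : Nat.card F = 2^h := by rw [Nat.card_eq_fintype_card, hcard]
    have hset : S0 = (f.ker : Set F) := by
      ext a; simp [AddMonoidHom.mem_ker, hf, hS0def, hT]
    rw [hset, ← Nat.card_coe_set_eq]
    have h4 : Nat.card ↥(f.ker : Set F) = Nat.card f.ker := rfl
    rw [h4]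
    rw [h2, h3] at h1
    omega
  have h0S0 : (0:F) ∈ S0 := by simp [hS0def, hT]
  have hS0' : (S0 \ {0}).ncard = k - 1 := by
    rw [Set.ncard_diff (by simpa using h0S0) (Set.toFinite _), hS0, Set.ncard_singleton]
  set NZ : Set F := {x : F | x ≠ 0} with hNZdef
  have hNZ : NZ.ncard = 2^h - 1 := by
    have : NZ = Set.univ \ {0} := by ext x; simp [hNZdef]
    rw [this, Set.ncard_diff (Set.subset_univ _) (Set.toFinite _), Set.ncard_univ,
      Set.ncard_singleton, Nat.card_eq_fintype_card, hcard]
  -- cardinality of Δ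
  set D : Set (F × F) := {p : F × F | ∃ x a : F, x ≠ 0 ∧ Algebra.trace (ZMod 2) F a = 0 ∧
    p = (x, a * x ^ 2)} with hDdef
  have hDeq : D = (fun q : F × F => (q.1, q.2 * q.1^2)) '' (NZ ×ˢ S0) := by
    ext p
    constructor
    · rintro ⟨x, a, hx, ha, rfl⟩
      exact ⟨(x, a), ⟨hx, ha⟩, rfl⟩
    · rintro ⟨⟨x, a⟩, ⟨hx, ha⟩, rfl⟩
      exact ⟨x, a, hx, ha, rfl⟩
  have hD : D.ncard = (2^h - 1) * k := by
    rw [hDeq, Set.ncard_image_of_injOn, ← hNZ, ← hS0]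
    · rw [← Nat.card_coe_set_eq, Nat.card_congr (Equiv.Set.prod _ _), Nat.card_prod,
        Nat.card_coe_set_eq, Nat.card_coe_set_eq]
    · rintro ⟨x, a⟩ ⟨hx, _⟩ ⟨y, d⟩ ⟨hy, _⟩ hab
      simp only [Prod.mk.injEq] at hab
      obtain ⟨h1, h2⟩ := hab
      subst h1
      have : a = d := mul_right_cancel₀ (pow_ne_zero 2 hx) h2
      subst this; rfl
  -- arithmetic abbreviations
  have hMub : k - 1 ≤ (2^h - 1) * k := le_trans (by omega) (Nat.le_mul_of_pos_left k (by omega))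
  have hA : k ≤ k * k := Nat.le_mul_of_pos_left k (by omega)
  have hM : (2^h - 1) * k = 2 * (k * k) - k := by
    rw [hq, Nat.sub_mul, one_mul, mul_assoc]
  set L : Set (F × F) := {p : F × F | c * p.2 + m * p.1 + b = 0} with hLdef
  show D.ncard - (L ∩ D).ncard ∈ _
  simp only [Set.mem_insert_iff, Set.mem_singleton_iff]
  by_cases hc : c = 0
  · by_cases hm : m = 0
    · -- empty line
      have hb : b ≠ 0 := by
        intro hb; exact hcmb (by rw [hc, hm, hb])
      have hL : L ∩ D = ∅ := by
        ext p; simp [hLdef, hc, hm, hb]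
      right; right; right
      rw [hL, Set.ncard_empty, Nat.sub_zero, hD]
      have : (2:ℕ)^h * (2^h - 1) = ((2^h - 1) * k) * 2 := by rw [hq]; ring
      rw [this, Nat.mul_div_cancel _ (by norm_num)]
    · -- vertical line x = x0
      set x₀ : F := -b * m⁻¹ with hx₀def
      have hmx₀ : m * x₀ = -b := by rw [hx₀def]; field_simp
      have hline0 : ∀ x : F, m * x + b = 0 ↔ x = x₀ := by
        intro x
        constructor
        · intro H
          apply mul_left_cancel₀ hm
          rw [hmx₀]
          linear_combination H
        · intro H
          rw [H]
          rw [hmx₀]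
          ring
      by_cases hx₀ : x₀ = 0
      · have hL : L ∩ D = ∅ := by
          ext p
          simp only [Set.mem_inter_iff, Set.mem_empty_iff_false, iff_false]
          rintro ⟨hp1, x, a, hx, ha, rfl⟩
          simp only [hLdef, Set.mem_setOf_eq, hc, zero_mul, zero_add] at hp1
          exact hx (((hline0 x).mp hp1).trans hx₀)
        right; right; right
        rw [hL, Set.ncard_empty, Nat.sub_zero, hD]
        have : (2:ℕ)^h * (2^h - 1) = ((2^h - 1) * k) * 2 := by rw [hq]; ring
        rw [this, Nat.mul_div_cancel _ (by norm_num)]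
      · have hLD : L ∩ D = (fun a : F => ((x₀ : F), a * x₀^2)) '' S0 := by
          ext p
          constructor
          · rintro ⟨hp1, x, a, hx, ha, rfl⟩
            simp only [hLdef, Set.mem_setOf_eq, hc, zero_mul, zero_add] at hp1
            have hxx : x = x₀ := (hline0 x).mp hp1
            subst hxx
            exact ⟨a, ha, rfl⟩
          · rintro ⟨a, ha, rfl⟩
            refine ⟨?_, x₀, a, hx₀, ha, rfl⟩
            simp only [hLdef, Set.mem_setOf_eq, hc, zero_mul, zero_add]
            exact (hline0 x₀).mpr rfl
        have hcardLD : (L ∩ D).ncard = k := by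
          rw [hLD, Set.ncard_image_of_injOn, hS0]
          rintro a _ d _ hab
          simp only [Prod.mk.injEq] at hab
          exact mul_right_cancel₀ (pow_ne_zero 2 hx₀) hab.2
        right; left
        rw [hcardLD, hD]
        have e2 : ((2:ℕ)^h - 1) * k - k = (2^h - 2) * k := by
          rw [show (2:ℕ)^h - 2 = (2^h - 1) - 1 by omega,
            Nat.sub_mul ((2:ℕ)^h - 1) 1 k, one_mul]
        have e1 : (2:ℕ)^h * (2^h - 2) = ((2^h - 1) * k - k) * 2 := by
          rw [e2]
          generalize (2:ℕ)^h - 2 = a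
          rw [hq]; ring
        rw [e1, Nat.mul_div_cancel _ (by norm_num)]
  · -- nonvertical line y = m' x + b'
    set m' : F := -m * c⁻¹ with hm'def
    set b' : F := -b * c⁻¹ with hb'def
    have hcm' : c * m' = -m := by rw [hm'def]; field_simp
    have hcb' : c * b' = -b := by rw [hb'def]; field_simp
    have hline : ∀ p : F × F, c * p.2 + m * p.1 + b = 0 ↔ p.2 = m' * p.1 + b' := by
      intro p
      constructor
      · intro H
        apply mul_left_cancel₀ hc
        rw [mul_add, ← mul_assoc, hcm', hcb']
        linear_combination H
      · intro H
        rw [H, mul_add, ← mul_assoc, hcm', hcb']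
        ring
    set s : F := (frobeniusEquiv F 2).symm b' with hsdef
    have hss : s^2 = b' := hsq b'
    set u : F := m' + s with hudef
    have hkey : ∀ x : F, x ≠ 0 → T ((m' * x + b') * (x^2)⁻¹) = T (u * x⁻¹) := by
      intro x hx
      have e : (m' * x + b') * (x^2)⁻¹ = m' * x⁻¹ + (s * x⁻¹)^2 := by
        rw [← hss]; field_simp
      rw [e, hTadd, htr_sq, hudef, add_mul, hTadd]
    have hLD : L ∩ D =
        (fun x : F => (x, m' * x + b')) '' {x : F | x ≠ 0 ∧ T (u * x⁻¹) = 0} := by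
      ext p
      constructor
      · rintro ⟨hp1, x, a, hx, ha, rfl⟩
        simp only [hLdef, Set.mem_setOf_eq] at hp1
        have hy : a * x^2 = m' * x + b' := (hline (x, a * x^2)).mp hp1
        refine ⟨x, ⟨hx, ?_⟩, by simp [hy]⟩
        rw [← hkey x hx, ← hy, mul_assoc, mul_inv_cancel₀ (pow_ne_zero 2 hx), mul_one]
        exact ha
      · rintro ⟨x, ⟨hx, htr⟩, rfl⟩
        constructor
        · simp only [hLdef, Set.mem_setOf_eq]
          exact (hline (x, m' * x + b')).mpr rfl
        · refine ⟨x, (m' * x + b') * (x^2)⁻¹, hx, ?_, ?_⟩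
          · exact (hkey x hx).trans htr
          · simp only [Prod.mk.injEq, true_and]
            field_simp
    have hinj : Set.InjOn (fun x : F => (x, m' * x + b')) {x : F | x ≠ 0 ∧ T (u * x⁻¹) = 0} := by
      rintro x _ y _ hxy
      simp only [Prod.mk.injEq] at hxy
      exact hxy.1
    by_cases hu : u = 0
    · have hset : {x : F | x ≠ 0 ∧ T (u * x⁻¹) = 0} = NZ := by
        ext x; simp [hu, hNZdef, hT]
      have hcardLD : (L ∩ D).ncard = 2^h - 1 := by
        rw [hLD, Set.ncard_image_of_injOn hinj, hset, hNZ]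
      left
      rw [hcardLD, hD]
      have h21 : (2:ℕ)^h - 2 = 2 * (k - 1) := by omega
      have e2 : ((2:ℕ)^h - 1) * k - (2^h - 1) = (2^h - 1) * (k - 1) := by
        rw [Nat.mul_sub, mul_one]
      have e1 : ((2:ℕ)^h - 1) * (2^h - 2) = ((2^h - 1) * k - (2^h - 1)) * 2 := by
        rw [e2, h21]
        generalize (2:ℕ)^h - 1 = A
        generalize k - 1 = B
        ring
      rw [e1, Nat.mul_div_cancel _ (by norm_num)]
    · have hset : {x : F | x ≠ 0 ∧ T (u * x⁻¹) = 0} =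
          (fun z : F => u * z⁻¹) '' {z : F | z ≠ 0 ∧ T z = 0} := by
        ext x
        constructor
        · rintro ⟨hx, htr⟩
          refine ⟨u * x⁻¹, ⟨by simp [hu, hx], htr⟩, ?_⟩
          field_simp
        · rintro ⟨z, ⟨hz, htr⟩, rfl⟩
          constructor
          · simp [hu, hz]
          · have huz : u * (u * z⁻¹)⁻¹ = z := by field_simp
            rw [huz]; exact htr
      have hinj2 : Set.InjOn (fun z : F => u * z⁻¹) {z : F | z ≠ 0 ∧ T z = 0} := by
        rintro z _ w _ hzw
        simp only at hzw
        have := mul_left_cancel₀ hu hzw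
        exact inv_injective this
      have hzset : {z : F | z ≠ 0 ∧ T z = 0} = S0 \ {0} := by
        ext z; simp [hS0def, and_comm]
      have hcardLD : (L ∩ D).ncard = k - 1 := by
        rw [hLD, Set.ncard_image_of_injOn hinj, hset, Set.ncard_image_of_injOn hinj2,
          hzset, hS0']
      right; right; left
      rw [hcardLD, hD]
      have e1 : (2:ℕ)^h * 2^h - 2 * 2^h + 2 = ((2^h - 1) * k - (k - 1)) * 2 := by
        rw [hM, hq]
        have hkk : (2:ℕ) * k * (2 * k) = 4 * (k * k) := by ring
        rw [hkk]
        omega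
      rw [e1, Nat.mul_div_cancel _ (by norm_num)]
end

section
/- Let q = 2^h with h ≥ 2. The line Y₂ = 0 intersects Δ = {(x, a·x²) : x ∈ F_q^*, Tr(a) = 0} in exactly q − 1 points, and this is the maximum of |ℓ ∩ Δ| over all lines ℓ of F_q². -/
theorem stmt19 {F : Type*} [Field F] [Fintype F] [Algebra (ZMod 2) F]
    {h : ℕ} (hh : 2 ≤ h) (hcard : Fintype.card F = 2 ^ h) :
    Set.ncard ({p : F × F | p.2 = 0} ∩
      {p : F × F | ∃ x a : F, x ≠ 0 ∧ Algebra.trace (ZMod 2) F a = 0 ∧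
        p = (x, a * x ^ 2)}) = 2 ^ h - 1 ∧
    ∀ c m b : F, (c, m) ≠ (0, 0) →
      Set.ncard ({p : F × F | c * p.2 + m * p.1 + b = 0} ∩
        {p : F × F | ∃ x a : F, x ≠ 0 ∧ Algebra.trace (ZMod 2) F a = 0 ∧
          p = (x, a * x ^ 2)}) ≤ 2 ^ h - 1 := by
  classical
  have hcompl : ∀ b : F, ({b}ᶜ : Set F).ncard = Fintype.card F - 1 := by
    intro b
    have h1 := Set.ncard_add_ncard_compl ({b} : Set F)
    simp only [Set.ncard_singleton, Set.ncard_univ, Nat.card_eq_fintype_card] at h1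
    omega
  have hub : ∀ (t : Set F) (b : F), b ∉ t → t.ncard ≤ Fintype.card F - 1 := by
    intro t b hb
    calc t.ncard ≤ ({b}ᶜ : Set F).ncard := by
          refine Set.ncard_le_ncard (fun x hx => ?_) (Set.toFinite _)
          simp only [Set.mem_compl_iff, Set.mem_singleton_iff]
          rintro rfl; exact hb hx
      _ = Fintype.card F - 1 := hcompl b
  constructor
  · have hset : ({p : F × F | p.2 = 0} ∩
        {p : F × F | ∃ x a : F, x ≠ 0 ∧ Algebra.trace (ZMod 2) F a = 0 ∧
          p = (x, a * x ^ 2)}) = (fun x : F => (x, (0:F))) '' ({0}ᶜ : Set F) := by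
      ext p
      constructor
      · rintro ⟨h2, x, a, hx, hta, rfl⟩
        simp only [Set.mem_setOf_eq] at h2
        have ha : a = 0 := by
          rcases mul_eq_zero.mp h2 with h | h
          · exact h
          · exact absurd (pow_eq_zero_iff (by norm_num) |>.mp h) hx
        exact ⟨x, hx, by simp [ha]⟩
      · rintro ⟨x, hx, rfl⟩
        exact ⟨rfl, x, 0, hx, by simp, by simp⟩
    rw [hset, Set.ncard_image_of_injective _ (fun a b hab => by simpa using hab),
      hcompl, hcard]
  · intro c m b hcm
    rw [← hcard]
    by_cases hc : c = 0
    · subst hc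
      have hm : m ≠ 0 := by
        rintro rfl; exact hcm rfl
      -- vertical line: map p to p.2 * p.1⁻¹ * p.1⁻¹, which has trace 0
      obtain ⟨a₀, ha₀⟩ : ∃ a : F, Algebra.trace (ZMod 2) F a ≠ 0 := by
        have := Algebra.trace_ne_zero (ZMod 2) F
        rw [Ne, LinearMap.ext_iff, not_forall] at this
        simpa using this
      calc ({p : F × F | 0 * p.2 + m * p.1 + b = 0} ∩
            {p : F × F | ∃ x a : F, x ≠ 0 ∧ Algebra.trace (ZMod 2) F a = 0 ∧
              p = (x, a * x ^ 2)}).ncard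
          ≤ ({a : F | Algebra.trace (ZMod 2) F a = 0}).ncard := by
            refine Set.ncard_le_ncard_of_injOn (fun p => p.2 * p.1⁻¹ * p.1⁻¹) ?_ ?_
              (Set.toFinite _)
            · rintro p ⟨hl, x, a, hx, hta, rfl⟩
              simp only [Set.mem_setOf_eq]
              have : a * x ^ 2 * x⁻¹ * x⁻¹ = a := by
                rw [mul_assoc, ← mul_inv, ← pow_two, mul_assoc,
                  mul_inv_cancel₀ (pow_ne_zero 2 hx), mul_one]
              rw [this]; exact hta
            · rintro p ⟨hlp, x, a, hx, hta, rfl⟩ q ⟨hlq, y, d, hy, htd, rfl⟩ hpq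
              simp only [Set.mem_setOf_eq, zero_mul, zero_add] at hlp hlq
              have hxy : x = y := by
                have h1 : m * x = m * y := by
                  have := hlp.trans hlq.symm
                  linear_combination hlp - hlq
                exact mul_left_cancel₀ hm h1
              subst hxy
              simp only at hpq
              have key : ∀ e : F, e * x ^ 2 * x⁻¹ * x⁻¹ = e := fun e => by
                rw [mul_assoc, ← mul_inv, ← pow_two, mul_assoc,
                  mul_inv_cancel₀ (pow_ne_zero 2 hx), mul_one]
              have h2 := key a
              have h3 := key d
              rw [h2, h3] at hpq
              rw [hpq]
        _ ≤ Fintype.card F - 1 := hub _ a₀ (by simpa using ha₀)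
    · -- non-vertical line: p.1 determines p, and p.1 ≠ 0
      calc ({p : F × F | c * p.2 + m * p.1 + b = 0} ∩
            {p : F × F | ∃ x a : F, x ≠ 0 ∧ Algebra.trace (ZMod 2) F a = 0 ∧
              p = (x, a * x ^ 2)}).ncard
          ≤ ({0}ᶜ : Set F).ncard := by
            refine Set.ncard_le_ncard_of_injOn (fun p => p.1) ?_ ?_ (Set.toFinite _)
            · rintro p ⟨hl, x, a, hx, hta, rfl⟩
              simpa using hx
            · rintro p ⟨hlp, -⟩ q ⟨hlq, -⟩ hpq
              simp only [Set.mem_setOf_eq] at hlp hlq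
              have hpq' : p.1 = q.1 := hpq
              have h2 : p.2 = q.2 := by
                have : c * p.2 = c * q.2 := by
                  rw [hpq'] at hlp
                  linear_combination hlp - hlq
                exact mul_left_cancel₀ hc this
              exact Prod.ext hpq' h2
        _ = Fintype.card F - 1 := hcompl 0
end
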